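/- Let r be a positive natural number. Let K, R, Q be r×r real matrices with K skew-symmetric (Kᵀ = -K), R symmetric positive definite, and Q symmetric positive definite, and set A = (K - R) * Q. Let H : Fin r → Fin r → Fin r → ℝ be a third-order tensor such that for every k ∈ Fin r there exists a skew-symmetric matrix S_k with H i j k = Σ_l (S_k) i l * Q l j for all i, j. Let z : ℝ → (Fin r → ℝ) satisfy, for every t ∈ ℝ, HasDerivAt z (A.mulVec (z t) + g (z t)) t, where (g w) i = Σ_{j,k} H i j k * w j * w k. Then z t tends to 0 as t → +∞ (Tendsto z atTop (𝓝 0)), i.e., the reduced-order model is globally asymptotically stable. -/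

import Mathlib

open Matrix Filter

/-!
`V = zᵀ Q z` is a Lyapunov function. Writing `w = Q z`, one has
`dV/dt = 2 wᵀ (K - R) w + 2 wᵀ (H : z zᵀ) = -2 wᵀ R w`: the skew-symmetric `K` does no work, and
neither does the quadratic term, since it equals `Σ_k z_k S_k w` with every `S_k` skew-symmetric.
As all positive definite quadratic forms are comparable to `‖z‖²`, this gives `dV/dt ≤ -c V`
for some `c > 0`, so `V`, and with it `z`, decays exponentially.
-/

section QuadraticBounds

variable {E : Type*} [NormedAddCommGroup E] [NormedSpace ℝ E] {f : E → ℝ}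

theorem eq_norm_sq_mul_of_homogeneous (hf : ∀ (a : ℝ) x, f (a • x) = a ^ 2 * f x) (x : E) :
    f x = ‖x‖ ^ 2 * f (‖x‖⁻¹ • x) := by
  rcases eq_or_ne x 0 with rfl | hx
  · simpa using hf 0 0
  · rw [hf, ← mul_assoc, inv_pow, mul_inv_cancel₀ (by positivity), one_mul]

variable [FiniteDimensional ℝ E]

theorem exists_pos_mul_norm_sq_le_of_homogeneous (hcont : Continuous f)
    (hf : ∀ (a : ℝ) x, f (a • x) = a ^ 2 * f x) (hpos : ∀ x, x ≠ 0 → 0 < f x) :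
    ∃ c > 0, ∀ x, c * ‖x‖ ^ 2 ≤ f x := by
  rcases (Metric.sphere (0 : E) 1).eq_empty_or_nonempty with hempty | hne
  · refine ⟨1, one_pos, fun x => ?_⟩
    obtain rfl : x = 0 := by
      by_contra hx
      exact (hempty.subset (by simpa using norm_smul_inv_norm (𝕜 := ℝ) hx) : _ ∈ (∅ : Set E))
    simpa using (hf 0 0).symm.le
  obtain ⟨x₀, hx₀, hmin⟩ := (isCompact_sphere (0 : E) 1).exists_isMinOn hne hcont.continuousOn
  refine ⟨f x₀, hpos x₀ (ne_zero_of_mem_sphere one_ne_zero ⟨x₀, hx₀⟩), fun x => ?_⟩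
  rw [eq_norm_sq_mul_of_homogeneous hf x, mul_comm]
  rcases eq_or_ne x 0 with rfl | hx
  · simp
  · gcongr
    exact hmin (by simpa using norm_smul_inv_norm (𝕜 := ℝ) hx)

theorem exists_le_mul_norm_sq_of_homogeneous (hcont : Continuous f)
    (hf : ∀ (a : ℝ) x, f (a • x) = a ^ 2 * f x) : ∃ C > 0, ∀ x, f x ≤ C * ‖x‖ ^ 2 := by
  obtain ⟨C, hC⟩ := (isCompact_sphere (0 : E) 1).exists_bound_of_continuousOn hcont.continuousOn
  refine ⟨max C 1, by positivity, fun x => ?_⟩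
  rw [eq_norm_sq_mul_of_homogeneous hf x, mul_comm (max C 1)]
  rcases eq_or_ne x 0 with rfl | hx
  · simp
  · gcongr
    exact (le_abs_self _).trans <| (hC _ (by simpa using norm_smul_inv_norm (𝕜 := ℝ) hx)).trans
      (le_max_left _ _)

end QuadraticBounds

namespace Matrix

variable {n : Type*} [Fintype n]

theorem dotProduct_mulVec_smul_self (M : Matrix n n ℝ) (a : ℝ) (x : n → ℝ) :
    (a • x) ⬝ᵥ M *ᵥ (a • x) = a ^ 2 * (x ⬝ᵥ M *ᵥ x) := by
  rw [mulVec_smul, smul_dotProduct, dotProduct_smul, smul_eq_mul, smul_eq_mul]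
  ring

theorem continuous_dotProduct_mulVec_self (M : Matrix n n ℝ) :
    Continuous fun x : n → ℝ => x ⬝ᵥ M *ᵥ x := by
  fun_prop

theorem exists_dotProduct_mulVec_self_le_mul_norm_sq (M : Matrix n n ℝ) :
    ∃ C > 0, ∀ x, x ⬝ᵥ M *ᵥ x ≤ C * ‖x‖ ^ 2 :=
  exists_le_mul_norm_sq_of_homogeneous M.continuous_dotProduct_mulVec_self
    M.dotProduct_mulVec_smul_self

theorem PosDef.exists_mul_norm_sq_le_dotProduct_mulVec_self {M : Matrix n n ℝ} (hM : M.PosDef) :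
    ∃ c > 0, ∀ x, c * ‖x‖ ^ 2 ≤ x ⬝ᵥ M *ᵥ x :=
  exists_pos_mul_norm_sq_le_of_homogeneous M.continuous_dotProduct_mulVec_self
    M.dotProduct_mulVec_smul_self fun _ hx => by simpa using hM.dotProduct_mulVec_pos hx

theorem dotProduct_mulVec_self_eq_zero_of_transpose_eq_neg {K : Matrix n n ℝ} (hK : Kᵀ = -K)
    (w : n → ℝ) : w ⬝ᵥ K *ᵥ w = 0 := by
  have h := dotProduct_transpose_mulVec K w w
  rw [hK, neg_mulVec, dotProduct_neg] at h
  linarith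

theorem PosDef.exists_mul_norm_sq_le_mulVec_dotProduct_mulVec {R B : Matrix n n ℝ}
    (hR : R.PosDef) (hB : Function.Injective B.mulVec) :
    ∃ c > 0, ∀ x, c * ‖x‖ ^ 2 ≤ (B *ᵥ x) ⬝ᵥ R *ᵥ (B *ᵥ x) := by
  obtain ⟨c, hc, hle⟩ :=
    (hR.conjTranspose_mul_mul_same hB).exists_mul_norm_sq_le_dotProduct_mulVec_self
  refine ⟨c, hc, fun x => (hle x).trans_eq ?_⟩
  rw [conjTranspose_eq_transpose_of_trivial, ← mulVec_mulVec, ← mulVec_mulVec,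
    dotProduct_transpose_mulVec, dotProduct_comm]

end Matrix

theorem HasDerivAt.matrix_mulVec {n : Type*} [Fintype n] {f : ℝ → n → ℝ} {f' : n → ℝ} {t : ℝ}
    (M : Matrix n n ℝ) (hf : HasDerivAt f f' t) : HasDerivAt (fun s => M *ᵥ f s) (M *ᵥ f') t :=
  (LinearMap.toContinuousLinearMap M.mulVecLin).hasFDerivAt.comp_hasDerivAt t hf

theorem HasDerivAt.dotProduct {n : Type*} [Fintype n] {f g : ℝ → n → ℝ} {f' g' : n → ℝ} {t : ℝ}
    (hf : HasDerivAt f f' t) (hg : HasDerivAt g g' t) :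
    HasDerivAt (fun s => f s ⬝ᵥ g s) (f' ⬝ᵥ g t + f t ⬝ᵥ g') t := by
  have := HasDerivAt.fun_sum (u := Finset.univ) (A := fun i s => f s i * g s i) fun i _ =>
    (hasDerivAt_pi.1 hf i).mul (hasDerivAt_pi.1 hg i)
  rw [Finset.sum_add_distrib] at this
  exact this

theorem tendsto_atTop_zero_of_hasDerivAt_le_neg_mul {V V' : ℝ → ℝ} {c : ℝ} (hc : 0 < c)
    (hV : ∀ t, HasDerivAt V (V' t) t) (hV' : ∀ t, V' t ≤ -c * V t) (hV0 : ∀ t, 0 ≤ V t) :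
    Tendsto V atTop (nhds 0) := by
  have hanti : Antitone fun t => Real.exp (c * t) * V t := by
    refine antitone_of_hasDerivAt_nonpos
      (fun t => (((hasDerivAt_id t).const_mul c).exp).mul (hV t)) fun t => ?_
    have := mul_le_mul_of_nonneg_left (hV' t) (Real.exp_pos (c * t)).le
    simp only [id, mul_one, Pi.zero_apply]
    linarith
  have hbound : ∀ t, 0 ≤ t → V t ≤ Real.exp (-(c * t)) * V 0 := by
    intro t ht
    have := hanti ht
    simp only [mul_zero, Real.exp_zero, one_mul] at this
    rw [Real.exp_neg, inv_mul_eq_div, le_div_iff₀ (Real.exp_pos _)]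
    linarith
  have hexp : Tendsto (fun t => Real.exp (-(c * t)) * V 0) atTop (nhds 0) := by
    simpa using (Real.tendsto_exp_atBot.comp
      (tendsto_neg_atTop_atBot.comp (tendsto_id.const_mul_atTop hc))).mul_const (V 0)
  exact tendsto_of_tendsto_of_tendsto_of_le_of_le' tendsto_const_nhds hexp
    (Eventually.of_forall hV0) (eventually_ge_atTop 0 |>.mono hbound)

theorem tendsto_nhds_zero_of_mul_norm_sq_le {α E : Type*} [SeminormedAddCommGroup E]
    {l : Filter α} {z : α → E} {V : α → ℝ} {c : ℝ} (hc : 0 < c)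
    (hV : Tendsto V l (nhds 0)) (hzV : ∀ t, c * ‖z t‖ ^ 2 ≤ V t) : Tendsto z l (nhds 0) := by
  rw [tendsto_zero_iff_norm_tendsto_zero]
  refine tendsto_of_tendsto_of_tendsto_of_le_of_le tendsto_const_nhds
    (by simpa using (hV.div_const c).sqrt) (fun t => norm_nonneg _) fun t => ?_
  exact Real.le_sqrt_of_sq_le ((le_div_iff₀' hc).2 (hzV t))

section QuadraticModel

variable {n : Type*} [Fintype n]

/-- The paper's `H : w wᵀ`. -/
def quadraticContraction (H : n → n → n → ℝ) (w : n → ℝ) : n → ℝ :=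
  fun i => ∑ j, ∑ k, H i j k * w j * w k

def IsEnergyPreserving (Q : Matrix n n ℝ) (H : n → n → n → ℝ) : Prop :=
  ∀ k, ∃ S : Matrix n n ℝ, Sᵀ = -S ∧ ∀ i j, H i j k = ∑ l, S i l * Q l j

theorem IsEnergyPreserving.dotProduct_quadraticContraction_eq_zero {Q : Matrix n n ℝ}
    {H : n → n → n → ℝ} (hH : IsEnergyPreserving Q H) (x : n → ℝ) :
    (Q *ᵥ x) ⬝ᵥ quadraticContraction H x = 0 := by
  choose S hS hHS using hH
  have hslices : quadraticContraction H x = ∑ k, x k • (S k *ᵥ (Q *ᵥ x)) := by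
    ext i
    simp only [quadraticContraction, hHS, Finset.sum_apply, Pi.smul_apply, smul_eq_mul, mulVec,
      dotProduct, Finset.sum_mul, Finset.mul_sum]
    rw [Finset.sum_comm]
    refine Finset.sum_congr rfl fun k _ => ?_
    rw [Finset.sum_comm]
    exact Finset.sum_congr rfl fun l _ => Finset.sum_congr rfl fun j _ => by ring
  simp only [hslices, dotProduct_sum, dotProduct_smul,
    dotProduct_mulVec_self_eq_zero_of_transpose_eq_neg (hS _), smul_zero, Finset.sum_const_zero]

theorem IsEnergyPreserving.mulVec_dotProduct_vectorField {K R Q : Matrix n n ℝ}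
    {H : n → n → n → ℝ} (hK : Kᵀ = -K) (hH : IsEnergyPreserving Q H) (x : n → ℝ) :
    (Q *ᵥ x) ⬝ᵥ (((K - R) * Q) *ᵥ x + quadraticContraction H x) =
      -((Q *ᵥ x) ⬝ᵥ R *ᵥ (Q *ᵥ x)) := by
  rw [dotProduct_add, hH.dotProduct_quadraticContraction_eq_zero, ← mulVec_mulVec, sub_mulVec,
    dotProduct_sub, dotProduct_mulVec_self_eq_zero_of_transpose_eq_neg hK]
  ring

theorem HasDerivAt.dotProduct_mulVec_self {f : ℝ → n → ℝ} {f' : n → ℝ} {t : ℝ}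
    {Q : Matrix n n ℝ} (hQ : Qᵀ = Q) (hf : HasDerivAt f f' t) :
    HasDerivAt (fun s => f s ⬝ᵥ Q *ᵥ f s) (2 * ((Q *ᵥ f t) ⬝ᵥ f')) t := by
  convert hf.dotProduct (hf.matrix_mulVec Q) using 1
  have h := dotProduct_transpose_mulVec Q (f t) f'
  rw [hQ] at h
  rw [h, dotProduct_comm f']
  ring

end QuadraticModel

theorem stmt6_general (r : ℕ) (K R Q : Matrix (Fin r) (Fin r) ℝ)
    (hK : Kᵀ = -K) (hR : R.PosDef) (hQ : Q.PosDef)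
    (A : Matrix (Fin r) (Fin r) ℝ) (hA : A = (K - R) * Q)
    (H : Fin r → Fin r → Fin r → ℝ)
    (hH : ∀ k : Fin r, ∃ S : Matrix (Fin r) (Fin r) ℝ, Sᵀ = -S ∧
      ∀ i j : Fin r, H i j k = ∑ l, S i l * Q l j)
    (g : (Fin r → ℝ) → (Fin r → ℝ))
    (hg : ∀ (w : Fin r → ℝ) (i : Fin r), g w i = ∑ j, ∑ k, H i j k * w j * w k)
    (z : ℝ → Fin r → ℝ)
    (hz : ∀ t : ℝ, HasDerivAt z (A.mulVec (z t) + g (z t)) t) :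
    Tendsto z atTop (nhds 0) := by
  obtain rfl : g = quadraticContraction H := funext fun w => funext (hg w)
  replace hH : IsEnergyPreserving Q H := hH
  have hQT : Qᵀ = Q := (isHermitian_iff_isSymm.1 hQ.isHermitian).eq
  obtain ⟨cQ, hcQ, hQlow⟩ := hQ.exists_mul_norm_sq_le_dotProduct_mulVec_self
  obtain ⟨CQ, hCQ, hQup⟩ := Q.exists_dotProduct_mulVec_self_le_mul_norm_sq
  obtain ⟨cD, hcD, hDlow⟩ :=
    hR.exists_mul_norm_sq_le_mulVec_dotProduct_mulVec (mulVec_injective_iff_isUnit.2 hQ.isUnit)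
  set V := fun t => z t ⬝ᵥ Q *ᵥ z t
  have hV : ∀ t, HasDerivAt V (-2 * ((Q *ᵥ z t) ⬝ᵥ R *ᵥ (Q *ᵥ z t))) t := fun t => by
    have := (hz t).dotProduct_mulVec_self hQT
    rwa [hA, hH.mulVec_dotProduct_vectorField hK, mul_neg, ← neg_mul] at this
  have hV' : ∀ t, -2 * ((Q *ᵥ z t) ⬝ᵥ R *ᵥ (Q *ᵥ z t)) ≤ -(2 * cD / CQ) * V t := fun t => by
    have h : cD / CQ * V t ≤ (Q *ᵥ z t) ⬝ᵥ R *ᵥ (Q *ᵥ z t) :=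
      calc cD / CQ * V t ≤ cD / CQ * (CQ * ‖z t‖ ^ 2) := by gcongr; exact hQup (z t)
        _ = cD * ‖z t‖ ^ 2 := by field_simp
        _ ≤ _ := hDlow (z t)
    linarith [show -(2 * cD / CQ) * V t = -2 * (cD / CQ * V t) by ring]
  have hVpos : ∀ t, 0 ≤ V t := fun t => (by positivity : 0 ≤ cQ * ‖z t‖ ^ 2).trans (hQlow (z t))
  exact tendsto_nhds_zero_of_mul_norm_sq_le hcQ
    (tendsto_atTop_zero_of_hasDerivAt_le_neg_mul (by positivity) hV hV' hVpos)
    fun t => hQlow (z t)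

/-- Global asymptotic stability of the parameterized quadratic reduced-order dynamics:
along any solution of `dz/dt = A z + H : z zᵀ` with `A = (K - R) * Q` (`K` skew-symmetric,
`R` symmetric positive definite, `Q` symmetric positive definite) and energy-preserving `H`,
the state `z(t)` tends to `0` as `t → +∞`. -/
theorem stmt6 (r : ℕ) (hr : 0 < r) (K R Q : Matrix (Fin r) (Fin r) ℝ)
    (hK : Kᵀ = -K) (hR : R.PosDef) (hQ : Q.PosDef)
    (A : Matrix (Fin r) (Fin r) ℝ) (hA : A = (K - R) * Q)
    (H : Fin r → Fin r → Fin r → ℝ)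
    (hH : ∀ k : Fin r, ∃ S : Matrix (Fin r) (Fin r) ℝ, Sᵀ = -S ∧
      ∀ i j : Fin r, H i j k = ∑ l, S i l * Q l j)
    (g : (Fin r → ℝ) → (Fin r → ℝ))
    (hg : ∀ (w : Fin r → ℝ) (i : Fin r), g w i = ∑ j, ∑ k, H i j k * w j * w k)
    (z : ℝ → Fin r → ℝ)
    (hz : ∀ t : ℝ, HasDerivAt z (A.mulVec (z t) + g (z t)) t) :
    Tendsto z atTop (nhds 0) :=
  stmt6_general r K R Q hK hR hQ A hA H hH g hg z hz
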